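/- Let R, B ⊂ ℝ² be finite disjoint sets with R ∪ B in general position, |R| = n ≥ 2. For a red point r ∈ R, draw the n−1 rays from r through the other red points, partitioning the plane into n−1 sectors with apex r; call a sector blue if it contains at least one blue point, and let p(r) be the number of blue sectors with respect to r. Then the number of empty red-red-blue triangles in R ∪ B is at least (min_{r∈R} p(r)) · n / 2. -/

import Mathlib

/-- No three distinct points of `S` are collinear. -/
def GenPos (S : Set ℂ) : Prop :=
  ∀ p ∈ S, ∀ q ∈ S, ∀ r ∈ S, p ≠ q → p ≠ r → q ≠ r → ¬ Collinear ℝ ({p, q, r} : Set ℂ)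

/-- The counterclockwise angle in `[0, 2π)` from direction `u` to direction `v`. -/
noncomputable def ccwAngle (u v : ℂ) : ℝ :=
  if 0 ≤ (v / u).arg then (v / u).arg else (v / u).arg + 2 * Real.pi

/-- `q` lies in the sector with apex `r` that starts at the ray from `r` through the red
point `s` and extends counterclockwise to the next ray through a red point. -/
def inSector (R : Finset ℂ) (r s q : ℂ) : Prop :=
  ∀ s' ∈ R, s' ≠ r → s' ≠ s → ccwAngle (s - r) (q - r) ≤ ccwAngle (s - r) (s' - r)

/-- The blue sectors with respect to `r`: sectors (indexed by the red point on their
starting ray) containing at least one blue point. -/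
def blueSectors (R B : Finset ℂ) (r : ℂ) : Set ℂ :=
  {s ∈ (↑R : Set ℂ) | s ≠ r ∧ ∃ q ∈ B, inSector R r s q}

/-- The collection of empty red-red-blue triangles. -/
def emptyRRB (R B : Finset ℂ) : Set (Set ℂ) :=
  {T | ∃ a b c : ℂ, a ∈ R ∧ b ∈ R ∧ c ∈ B ∧ a ≠ b ∧ T = {a, b, c} ∧
    convexHull ℝ {a, b, c} ∩ (↑R ∪ ↑B : Set ℂ) = ({a, b, c} : Set ℂ)}

/-! For a red apex `r` and a blue sector starting at the ray `rs`, measure angles from `s - r`.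
If the sector has a blue point on the left of `rs`, the one of smallest angle spans an empty
triangle with `r` and `s`. Otherwise all its blue points lie on the right; the one of largest
angle spans an empty triangle with `r` and the red point `t` closing the sector (or with `r` and
`s` if there is no third red point). In every case the interior of the triangle lies in the
sector, so it contains no red point, and strictly between the chosen blue point and the sector
boundary, so it contains no blue point either.

Such a triangle arises from at most two (apex, sector) pairs: the apex is one of its two red
vertices, and the sectors at an apex meet only along rays, which avoid blue points by general
position. Double counting the pairs gives `p · n ≤ 2 · #triangles`. -/

open Complex Real Finset

lemma ccwAngle_nonneg (u v : ℂ) : 0 ≤ ccwAngle u v := by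
  unfold ccwAngle
  split_ifs with h
  · exact h
  · linarith [neg_pi_lt_arg (v / u), pi_pos]

lemma ccwAngle_lt_two_pi (u v : ℂ) : ccwAngle u v < 2 * π := by
  unfold ccwAngle
  split_ifs with h
  · linarith [arg_le_pi (v / u), pi_pos]
  · linarith [not_le.mp h]

lemma ccwAngle_self {u : ℂ} (hu : u ≠ 0) : ccwAngle u u = 0 := by
  simp [ccwAngle, div_self hu]

lemma coe_ccwAngle (u v : ℂ) : (ccwAngle u v : Real.Angle) = arg (v / u) := by
  unfold ccwAngle
  split_ifs
  · rfl
  · rw [Real.Angle.coe_add, Real.Angle.coe_two_pi, add_zero]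

lemma ccwAngle_pos {u v : ℂ} (h : (v / u).im ≠ 0) : 0 < ccwAngle u v := by
  unfold ccwAngle
  split_ifs with h'
  · exact h'.lt_of_ne fun h0 => h (arg_eq_zero_iff.mp h0.symm).2
  · linarith [neg_pi_lt_arg (v / u), pi_pos]

lemma ccwAngle_lt_pi {u v : ℂ} (h : 0 < (v / u).im) : ccwAngle u v < π := by
  rw [ccwAngle, if_pos (arg_nonneg_iff.mpr h.le)]
  exact arg_lt_pi_iff.mpr (Or.inr h.ne')

lemma pi_lt_ccwAngle {u v : ℂ} (h : (v / u).im < 0) : π < ccwAngle u v := by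
  rw [ccwAngle, if_neg (not_le.mpr (arg_neg_iff.mpr h))]
  linarith [neg_pi_lt_arg (v / u)]

lemma ccwAngle_add_ccwAngle {u v w : ℂ} (hu : u ≠ 0) (hv : v ≠ 0) (hw : w ≠ 0) :
    ccwAngle u v + ccwAngle v w = ccwAngle u w ∨
      ccwAngle u v + ccwAngle v w = ccwAngle u w + 2 * π := by
  have h : ((ccwAngle u v + ccwAngle v w : ℝ) : Real.Angle) = ccwAngle u w := by
    rw [Real.Angle.coe_add, coe_ccwAngle, coe_ccwAngle, coe_ccwAngle,
      ← arg_mul_coe_angle (div_ne_zero hv hu) (div_ne_zero hw hv)]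
    congr 2
    field_simp
  obtain ⟨k, hk⟩ := Real.Angle.angle_eq_iff_two_pi_dvd_sub.mp h
  have hlo : (-1 : ℝ) < k := by
    nlinarith [ccwAngle_nonneg u v, ccwAngle_nonneg v w, ccwAngle_lt_two_pi u w, pi_pos]
  have hhi : (k : ℝ) < 2 := by
    nlinarith [ccwAngle_lt_two_pi u v, ccwAngle_lt_two_pi v w, ccwAngle_nonneg u w, pi_pos]
  obtain rfl | rfl : k = 0 ∨ k = 1 := by
    have : -1 < k := by exact_mod_cast hlo
    have : k < 2 := by exact_mod_cast hhi
    omega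
  · left; push_cast at hk; linarith
  · right; push_cast at hk; linarith

lemma im_div_neg_iff {z w : ℂ} : (z / w).im < 0 ↔ 0 < (w / z).im := by
  rcases eq_or_ne (z / w) 0 with h | h
  · rw [← inv_div z w, h]; simp
  · rw [← inv_div z w, inv_im, div_pos_iff_of_pos_right (normSq_pos.mpr h), neg_pos]

/-- `0 < (w / z).im` says that `w` lies less than a half-turn counterclockwise from `z`; turning
that way either increases the angle measured from `u` or wraps past `2π`. -/
lemma ccwAngle_lt_or_of_im_div_pos {u z w : ℂ} (hu : u ≠ 0) (h : 0 < (w / z).im) :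
    ccwAngle u z < ccwAngle u w ∨ ccwAngle u w + π < ccwAngle u z := by
  have hz : z ≠ 0 := by rintro rfl; simp at h
  have hw : w ≠ 0 := by rintro rfl; simp at h
  rcases ccwAngle_add_ccwAngle hu hz hw with h' | h'
  · left; linarith [ccwAngle_pos h.ne']
  · right; linarith [ccwAngle_lt_pi h]

lemma im_div_neg_of_pi_lt_ccwAngle {u v : ℂ} (h₀ : (v / u).im ≠ 0) (h : π < ccwAngle u v) :
    (v / u).im < 0 :=
  h₀.lt_or_gt.resolve_right fun h' => lt_asymm h (ccwAngle_lt_pi h')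

lemma im_div_pos_of_ccwAngle_le {u z w : ℂ} (hu : u ≠ 0) (h₀ : (w / z).im ≠ 0)
    (hz : π < ccwAngle u z) (hzw : ccwAngle u z ≤ ccwAngle u w) : 0 < (w / z).im := by
  refine h₀.lt_or_gt.resolve_left fun h => ?_
  rcases ccwAngle_lt_or_of_im_div_pos hu (im_div_neg_iff.mp h) with h' | h' <;>
    linarith [ccwAngle_lt_two_pi u w]

lemma im_smul_add_smul_div (β γ : ℝ) (v w u : ℂ) :
    ((β • v + γ • w) / u).im = β * (v / u).im + γ * (w / u).im := by
  simp [Complex.real_smul, add_div, mul_div_assoc]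

lemma im_div_self (v : ℂ) : (v / v).im = 0 := by
  rcases eq_or_ne v 0 with rfl | h <;> simp [*]

lemma im_div_pos_of_smul_add_smul {v w : ℂ} {β γ : ℝ} (h : 0 < (w / v).im) (hβ : 0 < β)
    (hγ : 0 < γ) : 0 < ((β • v + γ • w) / v).im ∧ 0 < (w / (β • v + γ • w)).im := by
  refine ⟨?_, im_div_neg_iff.mp ?_⟩
  · rw [im_smul_add_smul_div, im_div_self]; positivity
  · rw [im_smul_add_smul_div, im_div_self, mul_zero, add_zero]
    exact mul_neg_of_pos_of_neg hβ (im_div_neg_iff.mpr h)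

lemma collinear_of_sub_eq_smul {p y x : ℂ} {t : ℝ} (h : x - p = t • (y - p)) :
    Collinear ℝ ({p, y, x} : Set ℂ) := by
  have hx : x = AffineMap.lineMap p y t := by
    rw [AffineMap.lineMap_apply, vsub_eq_sub, vadd_eq_add, ← h, sub_add_cancel]
  rw [Set.pair_comm, Set.insert_comm, hx]
  exact collinear_insert_of_mem_affineSpan_pair (AffineMap.lineMap_mem_affineSpan_pair _ _ _)

lemma GenPos.im_div_ne_zero {S : Set ℂ} (hgp : GenPos S) {r a b : ℂ} (hr : r ∈ S) (ha : a ∈ S)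
    (hb : b ∈ S) (hra : r ≠ a) (hrb : r ≠ b) (hab : a ≠ b) : ((b - r) / (a - r)).im ≠ 0 := by
  intro h
  refine hgp r hr a ha b hb hra hrb hab (collinear_of_sub_eq_smul (t := ((b - r) / (a - r)).re) ?_)
  have hz : (b - r) / (a - r) = (((b - r) / (a - r)).re : ℂ) := by apply Complex.ext <;> simp [h]
  rw [Complex.real_smul, ← hz, div_mul_cancel₀ _ (sub_ne_zero.mpr hra.symm)]

lemma exists_smul_add_smul_of_mem_convexHull {r a q x : ℂ}
    (hx : x ∈ convexHull ℝ ({r, a, q} : Set ℂ)) :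
    ∃ β γ : ℝ, 0 ≤ β ∧ 0 ≤ γ ∧ β + γ ≤ 1 ∧ x - r = β • (a - r) + γ • (q - r) := by
  rw [convexHull_insert (by simp), convexHull_pair, mem_convexJoin] at hx
  obtain ⟨_, rfl, y, ⟨c, d, hc, hd, hcd, rfl⟩, e, f, he, hf, hef, rfl⟩ := hx
  refine ⟨f * c, f * d, by positivity, by positivity, by nlinarith, ?_⟩
  obtain rfl : e = 1 - f := by linarith
  obtain rfl : c = 1 - d := by linarith
  simp only [Complex.real_smul]
  push_cast
  ring

lemma mem_emptyRRB_of_forall_ne {R B : Finset ℂ} (hdisj : Disjoint R B)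
    (hgp : GenPos (↑R ∪ ↑B)) {r a q : ℂ} (hr : r ∈ R) (ha : a ∈ R) (hq : q ∈ B) (har : a ≠ r)
    (hint : ∀ x ∈ (↑R ∪ ↑B : Set ℂ), x ≠ r → x ≠ a → x ≠ q → ∀ β γ : ℝ, 0 < β → 0 < γ →
      β + γ < 1 → x - r ≠ β • (a - r) + γ • (q - r)) :
    ({r, a, q} : Set ℂ) ∈ emptyRRB R B := by
  have hqr : q ≠ r := ne_of_mem_of_not_mem hq (disjoint_left.mp hdisj hr)
  have hqa : q ≠ a := ne_of_mem_of_not_mem hq (disjoint_left.mp hdisj ha)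
  have hrS : r ∈ (↑R ∪ ↑B : Set ℂ) := Or.inl hr
  have haS : a ∈ (↑R ∪ ↑B : Set ℂ) := Or.inl ha
  have hqS : q ∈ (↑R ∪ ↑B : Set ℂ) := Or.inr hq
  refine ⟨r, a, q, hr, ha, hq, har.symm, rfl, subset_antisymm ?_ fun x hx => ⟨subset_convexHull ℝ _ hx, ?_⟩⟩
  · rintro x ⟨hxT, hxS⟩
    by_contra hx
    simp only [Set.mem_insert_iff, Set.mem_singleton_iff, not_or] at hx
    obtain ⟨hxr, hxa, hxq⟩ := hx
    obtain ⟨β, γ, hβ, hγ, hβγ, hxe⟩ := exists_smul_add_smul_of_mem_convexHull hxT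
    rcases hβ.eq_or_lt with rfl | hβ
    · exact hgp r hrS q hqS x hxS hqr.symm (Ne.symm hxr) (Ne.symm hxq)
        (collinear_of_sub_eq_smul (t := γ) (by simpa using hxe))
    rcases hγ.eq_or_lt with rfl | hγ
    · exact hgp r hrS a haS x hxS har.symm (Ne.symm hxr) (Ne.symm hxa)
        (collinear_of_sub_eq_smul (t := β) (by simpa using hxe))
    rcases hβγ.eq_or_lt with hβγ | hβγ
    · refine hgp q hqS a haS x hxS hqa (Ne.symm hxq) (Ne.symm hxa)
        (collinear_of_sub_eq_smul (t := β) ?_)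
      have hβγ' : (β : ℂ) + γ = 1 := by exact_mod_cast hβγ
      simp only [Complex.real_smul] at hxe ⊢
      linear_combination hxe + (q - r) * hβγ'
    · exact hint x hxS hxr hxa hxq β γ hβ hγ hβγ hxe
  · rcases hx with rfl | rfl | rfl <;> assumption

lemma inSector.mono {R : Finset ℂ} {r s q x : ℂ} (h : inSector R r s q)
    (hx : ccwAngle (s - r) (x - r) ≤ ccwAngle (s - r) (q - r)) : inSector R r s x :=
  fun s' hs' h₁ h₂ => hx.trans (h s' hs' h₁ h₂)

lemma eq_of_inSector_of_inSector {R B : Finset ℂ} (hdisj : Disjoint R B)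
    (hgp : GenPos (↑R ∪ ↑B)) {r s₁ s₂ q : ℂ} (hr : r ∈ R) (hs₁ : s₁ ∈ R) (hs₂ : s₂ ∈ R)
    (hq : q ∈ B) (h₁r : s₁ ≠ r) (h₂r : s₂ ≠ r) (h₁ : inSector R r s₁ q)
    (h₂ : inSector R r s₂ q) : s₁ = s₂ := by
  by_contra h₁₂
  have hqR : q ∉ R := disjoint_right.mp hdisj hq
  have pos : ∀ {a b : ℂ}, a ∈ (↑R ∪ ↑B : Set ℂ) → b ∈ (↑R ∪ ↑B : Set ℂ) → a ≠ r → b ≠ r →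
      a ≠ b → 0 < ccwAngle (a - r) (b - r) := fun ha hb har hbr hab =>
    ccwAngle_pos (hgp.im_div_ne_zero (Or.inl hr) ha hb har.symm hbr.symm hab)
  have hA := pos (Or.inl hs₁) (Or.inr hq) h₁r (ne_of_mem_of_not_mem hr hqR).symm
    (ne_of_mem_of_not_mem hs₁ hqR)
  have hC := pos (Or.inl hs₂) (Or.inr hq) h₂r (ne_of_mem_of_not_mem hr hqR).symm
    (ne_of_mem_of_not_mem hs₂ hqR)
  have hB := pos (Or.inl hs₁) (Or.inl hs₂) h₁r h₂r h₁₂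
  have hD := pos (Or.inl hs₂) (Or.inl hs₁) h₂r h₁r (Ne.symm h₁₂)
  have hle₁ := h₁ s₂ hs₂ h₂r (Ne.symm h₁₂)
  have hle₂ := h₂ s₁ hs₁ h₁r h₁₂
  have hu₁ := sub_ne_zero.mpr h₁r
  have hu₂ := sub_ne_zero.mpr h₂r
  have hv : q - r ≠ 0 := sub_ne_zero.mpr (ne_of_mem_of_not_mem hr hqR).symm
  rcases ccwAngle_add_ccwAngle hu₁ hu₂ hv with h | h <;>
    rcases ccwAngle_add_ccwAngle hu₁ hu₂ hu₁ with h' | h' <;>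
    rw [ccwAngle_self hu₁] at h' <;> linarith

section Existence

variable {R B : Finset ℂ} {r s : ℂ}

lemma exists_emptyRRB_of_im_pos (hdisj : Disjoint R B) (hgp : GenPos (↑R ∪ ↑B)) (hr : r ∈ R)
    (hs : s ∈ R) (hsr : s ≠ r) (h : ∃ q ∈ B, inSector R r s q ∧ 0 < ((q - r) / (s - r)).im) :
    ∃ a, ∃ q ∈ B, inSector R r s q ∧ ({r, a, q} : Set ℂ) ∈ emptyRRB R B := by
  classical
  have hu : s - r ≠ 0 := sub_ne_zero.mpr hsr
  obtain ⟨q, hqQ, hqmin⟩ :=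
    (B.filter fun q => inSector R r s q ∧ 0 < ((q - r) / (s - r)).im).exists_min_image
      (fun q => ccwAngle (s - r) (q - r)) (filter_nonempty_iff.mpr h)
  obtain ⟨hqB, hqsec, hqim⟩ := mem_filter.mp hqQ
  refine ⟨s, q, hqB, hqsec, mem_emptyRRB_of_forall_ne hdisj hgp hr hs hqB hsr ?_⟩
  intro x hx hxr hxs _ β γ hβ hγ _ hxe
  obtain ⟨hxim, hqx⟩ := im_div_pos_of_smul_add_smul hqim hβ hγ
  rw [← hxe] at hxim hqx
  have hlt : ccwAngle (s - r) (x - r) < ccwAngle (s - r) (q - r) :=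
    (ccwAngle_lt_or_of_im_div_pos hu hqx).resolve_right
      (not_lt.mpr (by linarith [ccwAngle_lt_pi hxim, ccwAngle_nonneg (s - r) (q - r)]))
  rcases hx with hxR | hxB
  · exact (hqsec x hxR hxr hxs).not_gt hlt
  · exact (hqmin x (mem_filter.mpr ⟨hxB, hqsec.mono hlt.le, hxim⟩)).not_gt hlt

lemma exists_emptyRRB_of_im_neg_of_exists (hdisj : Disjoint R B) (hgp : GenPos (↑R ∪ ↑B))
    (hr : r ∈ R) (hs : s ∈ R) (hsr : s ≠ r) (hq₀ : ∃ q ∈ B, inSector R r s q)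
    (hall : ∀ q ∈ B, inSector R r s q → ((q - r) / (s - r)).im < 0)
    (ht : ∃ t ∈ R, t ≠ r ∧ t ≠ s) :
    ∃ a, ∃ q ∈ B, inSector R r s q ∧ ({r, a, q} : Set ℂ) ∈ emptyRRB R B := by
  classical
  have hu : s - r ≠ 0 := sub_ne_zero.mpr hsr
  obtain ⟨t, htT, htmin⟩ := (R.filter fun t => t ≠ r ∧ t ≠ s).exists_min_image
    (fun t => ccwAngle (s - r) (t - r)) (filter_nonempty_iff.mpr ht)
  obtain ⟨htR, htr, hts⟩ := mem_filter.mp htT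
  have htsec : inSector R r s t := fun s' hs' h₁ h₂ => htmin s' (mem_filter.mpr ⟨hs', h₁, h₂⟩)
  obtain ⟨q, hqQ, hqmax⟩ := (B.filter (inSector R r s)).exists_max_image
    (fun q => ccwAngle (s - r) (q - r)) (filter_nonempty_iff.mpr hq₀)
  obtain ⟨hqB, hqsec⟩ := mem_filter.mp hqQ
  have hqt : ccwAngle (s - r) (q - r) ≤ ccwAngle (s - r) (t - r) := hqsec t htR htr hts
  have hqim := hall q hqB hqsec
  have hqpi := pi_lt_ccwAngle hqim
  have htim : ((t - r) / (s - r)).im < 0 := im_div_neg_of_pi_lt_ccwAngle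
    (hgp.im_div_ne_zero (Or.inl hr) (Or.inl hs) (Or.inl htR) hsr.symm htr.symm hts.symm)
    (hqpi.trans_le hqt)
  have hqR : q ∉ R := disjoint_right.mp hdisj hqB
  have hqt' : 0 < ((t - r) / (q - r)).im := im_div_pos_of_ccwAngle_le hu
    (hgp.im_div_ne_zero (Or.inl hr) (Or.inr hqB) (Or.inl htR) (ne_of_mem_of_not_mem hr hqR)
      htr.symm (ne_of_mem_of_not_mem htR hqR).symm) hqpi hqt
  refine ⟨t, q, hqB, hqsec, mem_emptyRRB_of_forall_ne hdisj hgp hr htR hqB htr ?_⟩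
  intro x hx hxr hxt _ β γ hβ hγ _ hxe
  have hxe' : x - r = γ • (q - r) + β • (t - r) := by rw [hxe, add_comm]
  obtain ⟨hqx, hxt'⟩ := im_div_pos_of_smul_add_smul hqt' hγ hβ
  rw [← hxe'] at hqx hxt'
  have hxim : ((x - r) / (s - r)).im < 0 := by
    rw [hxe, im_smul_add_smul_div]
    nlinarith
  have h₁ : ccwAngle (s - r) (q - r) < ccwAngle (s - r) (x - r) :=
    (ccwAngle_lt_or_of_im_div_pos hu hqx).resolve_right
      (not_lt.mpr (by linarith [pi_lt_ccwAngle hxim, ccwAngle_lt_two_pi (s - r) (q - r)]))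
  have h₂ : ccwAngle (s - r) (x - r) < ccwAngle (s - r) (t - r) :=
    (ccwAngle_lt_or_of_im_div_pos hu hxt').resolve_right
      (not_lt.mpr (by linarith [ccwAngle_lt_two_pi (s - r) (x - r)]))
  rcases hx with hxR | hxB
  · have hxs : x ≠ s := by rintro rfl; simp [div_self hu] at hxim
    exact (htmin x (mem_filter.mpr ⟨hxR, hxr, hxs⟩)).not_gt h₂
  · exact (hqmax x (mem_filter.mpr ⟨hxB, htsec.mono h₂.le⟩)).not_gt h₁

lemma exists_emptyRRB_of_im_neg_of_forall (hdisj : Disjoint R B) (hgp : GenPos (↑R ∪ ↑B))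
    (hr : r ∈ R) (hs : s ∈ R) (hsr : s ≠ r) (hq₀ : ∃ q ∈ B, inSector R r s q)
    (hall : ∀ q ∈ B, inSector R r s q → ((q - r) / (s - r)).im < 0)
    (hR : ∀ t ∈ R, t ≠ r → t = s) :
    ∃ a, ∃ q ∈ B, inSector R r s q ∧ ({r, a, q} : Set ℂ) ∈ emptyRRB R B := by
  classical
  have hu : s - r ≠ 0 := sub_ne_zero.mpr hsr
  have hsec : ∀ x, inSector R r s x := fun _ s' hs' h₁ h₂ => absurd (hR s' hs' h₁) h₂
  obtain ⟨q, hqQ, hqmax⟩ := (B.filter (inSector R r s)).exists_max_image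
    (fun q => ccwAngle (s - r) (q - r)) (filter_nonempty_iff.mpr hq₀)
  obtain ⟨hqB, hqsec⟩ := mem_filter.mp hqQ
  have hqim := hall q hqB hqsec
  refine ⟨s, q, hqB, hqsec, mem_emptyRRB_of_forall_ne hdisj hgp hr hs hqB hsr ?_⟩
  intro x hx hxr hxs _ β γ hβ hγ _ hxe
  have hxe' : x - r = γ • (q - r) + β • (s - r) := by rw [hxe, add_comm]
  obtain ⟨hqx, -⟩ := im_div_pos_of_smul_add_smul (im_div_neg_iff.mp hqim) hγ hβ
  rw [← hxe'] at hqx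
  have hxim : ((x - r) / (s - r)).im < 0 := by
    rw [hxe, im_smul_add_smul_div, im_div_self]
    nlinarith
  have hlt : ccwAngle (s - r) (q - r) < ccwAngle (s - r) (x - r) :=
    (ccwAngle_lt_or_of_im_div_pos hu hqx).resolve_right
      (not_lt.mpr (by linarith [pi_lt_ccwAngle hxim, ccwAngle_lt_two_pi (s - r) (q - r)]))
  rcases hx with hxR | hxB
  · exact hxs (hR x hxR hxr)
  · exact (hqmax x (mem_filter.mpr ⟨hxB, hsec x⟩)).not_gt hlt

lemma exists_emptyRRB_of_mem_blueSectors (hdisj : Disjoint R B) (hgp : GenPos (↑R ∪ ↑B))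
    (hr : r ∈ R) (hs : s ∈ blueSectors R B r) :
    ∃ a, ∃ q ∈ B, inSector R r s q ∧ ({r, a, q} : Set ℂ) ∈ emptyRRB R B := by
  obtain ⟨hsR, hsr, hq₀⟩ := hs
  by_cases hA : ∃ q ∈ B, inSector R r s q ∧ 0 < ((q - r) / (s - r)).im
  · exact exists_emptyRRB_of_im_pos hdisj hgp hr hsR hsr hA
  have hall : ∀ q ∈ B, inSector R r s q → ((q - r) / (s - r)).im < 0 := fun q hq hqs => by
    have hqR : q ∉ R := disjoint_right.mp hdisj hq
    exact (hgp.im_div_ne_zero (Or.inl hr) (Or.inl hsR) (Or.inr hq) hsr.symm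
      (ne_of_mem_of_not_mem hr hqR) (ne_of_mem_of_not_mem hsR hqR)).lt_or_gt.resolve_right
      fun h => hA ⟨q, hq, hqs, h⟩
  by_cases ht : ∃ t ∈ R, t ≠ r ∧ t ≠ s
  · exact exists_emptyRRB_of_im_neg_of_exists hdisj hgp hr hsR hsr hq₀ hall ht
  · push Not at ht
    exact exists_emptyRRB_of_im_neg_of_forall hdisj hgp hr hsR hsr hq₀ hall ht

end Existence

lemma finite_emptyRRB (R B : Finset ℂ) : (emptyRRB R B).Finite := by
  refine ((R ×ˢ R ×ˢ B : Finset _).finite_toSet.image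
    fun t => ({t.1, t.2.1, t.2.2} : Set ℂ)).subset ?_
  rintro T ⟨a, b, c, ha, hb, hc, -, rfl, -⟩
  exact ⟨(a, b, c), by simp [ha, hb, hc], rfl⟩

lemma ncard_blueSectors (R B : Finset ℂ) (r : ℂ) [DecidablePred (· ∈ blueSectors R B r)] :
    (blueSectors R B r).ncard = #(R.filter (· ∈ blueSectors R B r)) := by
  rw [← Set.ncard_coe_finset, coe_filter]
  congr 1
  ext x
  exact ⟨fun h => ⟨h.1, h⟩, fun h => h.2⟩

lemma card_sectorPairs_le_two_of_mem_emptyRRB {R B : Finset ℂ} (hdisj : Disjoint R B) (hgp : GenPos (↑R ∪ ↑B))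
    {T : Set ℂ} (hT : T ∈ emptyRRB R B) (P : Finset (Σ _ : ℂ, ℂ))
    (hP : ∀ z ∈ P, z.1 ∈ R ∧ z.2 ∈ R ∧ z.2 ≠ z.1) [DecidablePred fun z : Σ _ : ℂ, ℂ =>
      z.1 ∈ T ∧ ∃ q ∈ B, q ∈ T ∧ inSector R z.1 z.2 q] :
    #(P.filter fun z => z.1 ∈ T ∧ ∃ q ∈ B, q ∈ T ∧ inSector R z.1 z.2 q) ≤ 2 := by
  classical
  obtain ⟨a, b, c, ha, hb, hc, -, rfl, -⟩ := hT
  have hblue : ∀ q ∈ B, q ∈ ({a, b, c} : Set ℂ) → q = c := by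
    rintro q hq (rfl | rfl | rfl)
    exacts [absurd ha (disjoint_right.mp hdisj hq), absurd hb (disjoint_right.mp hdisj hq), rfl]
  refine (card_le_card_of_injOn Sigma.fst (t := {a, b}) ?_ ?_).trans card_le_two
  · intro z hz
    obtain ⟨hzP, hzT, -⟩ := mem_filter.mp hz
    rcases hzT with h | h | h
    · simp [h]
    · simp [h]
    · exact absurd (h ▸ (hP z hzP).1) (disjoint_right.mp hdisj hc)
  · intro z hz z' hz' h
    obtain ⟨hzP, -, q, hq, hqT, hqs⟩ := mem_filter.mp hz
    obtain ⟨hzP', -, q', hq', hqT', hqs'⟩ := mem_filter.mp hz'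
    obtain ⟨hz₁, hz₂, hzne⟩ := hP z hzP
    obtain ⟨-, hz₂', hzne'⟩ := hP z' hzP'
    rw [hblue q hq hqT] at hqs
    rw [hblue q' hq' hqT', ← h] at hqs'
    exact Sigma.ext h (heq_of_eq (eq_of_inSector_of_inSector hdisj hgp hz₁ hz₂ hz₂' hc hzne
      (h ▸ hzne') hqs hqs'))

theorem stmt_6_general (R B : Finset ℂ) (n : ℕ) (hn : R.card = n)
    (hdisj : Disjoint R B) (hgp : GenPos (↑R ∪ ↑B))
    (p : ℕ) (hp : ∀ r ∈ R, p ≤ (blueSectors R B r).ncard) :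
    p * n ≤ 2 * (emptyRRB R B).ncard := by
  classical
  set P := R.sigma fun r => R.filter (· ∈ blueSectors R B r)
  have hP : ∀ z ∈ P, z.1 ∈ R ∧ z.2 ∈ R ∧ z.2 ≠ z.1 := fun z hz => by
    obtain ⟨h₁, h₂⟩ := mem_sigma.mp hz
    exact ⟨h₁, (mem_filter.mp h₂).1, (mem_filter.mp h₂).2.2.1⟩
  have hcard : p * n ≤ #P := by
    rw [card_sigma, ← hn, mul_comm]
    exact card_nsmul_le_sum _ _ _ fun r hr => (hp r hr).trans_eq (ncard_blueSectors R B r)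
  have hcount := card_mul_le_card_mul
    (fun (z : Σ _ : ℂ, ℂ) (T : Set ℂ) => z.1 ∈ T ∧ ∃ q ∈ B, q ∈ T ∧ inSector R z.1 z.2 q)
    (s := P) (t := (finite_emptyRRB R B).toFinset) (m := 1) (n := 2)
    (fun z hz => by
      obtain ⟨h₁, h₂⟩ := mem_sigma.mp hz
      obtain ⟨a, q, hq, hqs, hT⟩ :=
        exists_emptyRRB_of_mem_blueSectors hdisj hgp h₁ (mem_filter.mp h₂).2
      exact card_pos.mpr ⟨_, mem_filter.mpr ⟨(finite_emptyRRB R B).mem_toFinset.mpr hT,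
        by simp, q, hq, by simp, hqs⟩⟩)
    (fun T hT => card_sectorPairs_le_two_of_mem_emptyRRB hdisj hgp ((finite_emptyRRB R B).mem_toFinset.mp hT) P hP)
  rw [Set.ncard_eq_toFinset_card _ (finite_emptyRRB R B)]
  omega

/-- If every red point `r` has at least `p` blue sectors with respect to it, then the
number of empty red-red-blue triangles is at least `p · n / 2`. -/
theorem stmt_6 (R B : Finset ℂ) (n : ℕ) (hn : R.card = n) (h2 : 2 ≤ n)
    (hdisj : Disjoint R B) (hgp : GenPos (↑R ∪ ↑B))
    (p : ℕ) (hp : ∀ r ∈ R, p ≤ (blueSectors R B r).ncard) :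
    p * n ≤ 2 * (emptyRRB R B).ncard :=
  stmt_6_general R B n hn hdisj hgp p hp
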